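/- Let φ_1, φ_2 : Γ → K* be two splittings of the valuation (group homomorphisms with val ∘ φ_j = id on Γ), let w ∈ Γ^n, and let I ⊆ K[x_1^{±1},…,x_n^{±1}] be an ideal. Let in_w^{φ_j}(I) ⊆ k[x_1^{±1},…,x_n^{±1}] denote the initial ideal computed using the splitting φ_j. Then there is a k-algebra automorphism ψ of k[x_1^{±1},…,x_n^{±1}], given on variables by x_i ↦ (φ_1(w_i)/φ_2(w_i))‾ · x_i, such that ψ(in_w^{φ_2}(I)) = in_w^{φ_1}(I). -/

import Mathlib

open MvPolynomial
open scoped Classical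

noncomputable section

/-- Dot product `w·u` of a real weight vector with a nonnegative exponent vector. -/
def dotN {m : ℕ} (w : Fin m → ℝ) (u : Fin m →₀ ℕ) : ℝ := ∑ i, w i * (u i : ℝ)

/-- Dot product `w·u` of a real weight vector with an integer exponent vector. -/
def dotZ {n : ℕ} (w : Fin n → ℝ) (u : Fin n → ℤ) : ℝ := ∑ i, w i * (u i : ℝ)

/-- Dot product of two real vectors. -/
def dotR {m : ℕ} (c x : Fin m → ℝ) : ℝ := ∑ i, c i * x i

/-- A field `K` together with: a nontrivial real-valued (additive) valuation
`val : K* → ℝ` (recorded as a function on `K`, constrained only at nonzero elements);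
a residue field `𝕜` with the reduction map `res : K → 𝕜` (the canonical map
`R → 𝕜 = R/𝔪` on the valuation ring `R = {a : val a ≥ 0}`, junk elsewhere); and a fixed
splitting `t` of the valuation, i.e. a group-homomorphic section `w ↦ t^w` of `val`
defined on the value group `Γ = im val`. -/
structure ValSetup (K 𝕜 : Type) [Field K] [Field 𝕜] where
  val : K → ℝ
  val_mul : ∀ {a b : K}, a ≠ 0 → b ≠ 0 → val (a * b) = val a + val b
  val_add : ∀ {a b : K}, a ≠ 0 → b ≠ 0 → a + b ≠ 0 → min (val a) (val b) ≤ val (a + b)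
  val_one : val 1 = 0
  val_nontrivial : ∃ a : K, a ≠ 0 ∧ val a ≠ 0
  res : K → 𝕜
  res_add : ∀ {a b : K}, (a = 0 ∨ 0 ≤ val a) → (b = 0 ∨ 0 ≤ val b) → res (a + b) = res a + res b
  res_mul : ∀ {a b : K}, (a = 0 ∨ 0 ≤ val a) → (b = 0 ∨ 0 ≤ val b) → res (a * b) = res a * res b
  res_one : res 1 = 1
  res_zero : res 0 = 0
  res_eq_zero_iff : ∀ {a : K}, a ≠ 0 → 0 ≤ val a → (res a = 0 ↔ 0 < val a)
  res_surjective : ∀ c : 𝕜, ∃ a : K, (a = 0 ∨ 0 ≤ val a) ∧ res a = c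
  t : ℝ → K
  t_ne_zero : ∀ {r : ℝ}, (∃ a : K, a ≠ 0 ∧ val a = r) → t r ≠ 0
  t_add : ∀ {r₁ r₂ : ℝ}, (∃ a : K, a ≠ 0 ∧ val a = r₁) → (∃ a : K, a ≠ 0 ∧ val a = r₂) →
    t (r₁ + r₂) = t r₁ * t r₂
  val_t : ∀ {r : ℝ}, (∃ a : K, a ≠ 0 ∧ val a = r) → val (t r) = r

namespace ValSetup

variable {K 𝕜 : Type} [Field K] [Field 𝕜]

/-- The value group `Γ = val(K*) ⊆ ℝ`. -/
def Gamma (V : ValSetup K 𝕜) : Set ℝ := {r : ℝ | ∃ a : K, a ≠ 0 ∧ V.val a = r}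

/-- `trop(f)(w) = min { val(c_u) + w·u : c_u ≠ 0 }` for `f = Σ_u c_u x^u ∈ K[x_0,…,x_{m-1}]`. -/
def trop (V : ValSetup K 𝕜) {m : ℕ} (f : MvPolynomial (Fin m) K) (w : Fin m → ℝ) : ℝ :=
  sInf ((fun u => V.val (coeff u f) + dotN w u) '' (f.support : Set (Fin m →₀ ℕ)))

/-- The initial form `in_w(f) = Σ_{val(c_u)+w·u = trop(f)(w)} (t^{-val(c_u)} c_u)‾ x^u`
in `𝕜[x_0,…,x_{m-1}]`. -/
def initialForm (V : ValSetup K 𝕜) {m : ℕ} (w : Fin m → ℝ) (f : MvPolynomial (Fin m) K) :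
    MvPolynomial (Fin m) 𝕜 :=
  ∑ u ∈ f.support.filter (fun u => V.val (coeff u f) + dotN w u = V.trop f w),
    monomial u (V.res (V.t (-(V.val (coeff u f))) * coeff u f))

/-- The initial ideal `in_w(I) = ⟨in_w(f) : f ∈ I⟩ ⊆ 𝕜[x_0,…,x_{m-1}]`. -/
def initialIdeal (V : ValSetup K 𝕜) {m : ℕ} (w : Fin m → ℝ)
    (I : Ideal (MvPolynomial (Fin m) K)) : Ideal (MvPolynomial (Fin m) 𝕜) :=
  Ideal.span {g | ∃ f ∈ I, g = V.initialForm w f}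

/-- The Gröbner region `C_I[w] = {w' ∈ Γ^m : in_{w'}(I) = in_w(I)}`. -/
def groebnerRegion (V : ValSetup K 𝕜) {m : ℕ} (I : Ideal (MvPolynomial (Fin m) K))
    (w : Fin m → ℝ) : Set (Fin m → ℝ) :=
  {w' | (∀ i, w' i ∈ V.Gamma) ∧ V.initialIdeal w' I = V.initialIdeal w I}

end ValSetup

/-- `trop(g)(v) = min { v·u : c_u ≠ 0 }` for `g ∈ 𝕜[x]`, w.r.t. the trivial valuation on `𝕜`. -/
def tropTriv {𝕜 : Type} [Field 𝕜] {m : ℕ} (g : MvPolynomial (Fin m) 𝕜) (v : Fin m → ℝ) : ℝ :=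
  sInf ((fun u => dotN v u) '' (g.support : Set (Fin m →₀ ℕ)))

/-- Initial form `in_v(g)`, w.r.t. the trivial valuation on the residue field: the sum of the
terms of `g` whose exponents `u` minimize `v·u`. -/
def initialFormTriv {𝕜 : Type} [Field 𝕜] {m : ℕ} (v : Fin m → ℝ) (g : MvPolynomial (Fin m) 𝕜) :
    MvPolynomial (Fin m) 𝕜 :=
  ∑ u ∈ g.support.filter (fun u => dotN v u = tropTriv g v), monomial u (coeff u g)

/-- Initial ideal `in_v(J) = ⟨in_v(g) : g ∈ J⟩` w.r.t. the trivial valuation. -/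
def initialIdealTriv {𝕜 : Type} [Field 𝕜] {m : ℕ} (v : Fin m → ℝ)
    (J : Ideal (MvPolynomial (Fin m) 𝕜)) : Ideal (MvPolynomial (Fin m) 𝕜) :=
  Ideal.span {h | ∃ g ∈ J, h = initialFormTriv v g}

/-- A homogeneous ideal of `R[x_0,…,x_{m-1}]`: one containing all homogeneous components of
its elements. -/
def IsHomogIdeal {R : Type} [CommSemiring R] {m : ℕ} (I : Ideal (MvPolynomial (Fin m) R)) :
    Prop :=
  ∀ f ∈ I, ∀ d : ℕ, homogeneousComponent d f ∈ I

/-- A monomial ideal: an ideal generated by monomials. -/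
def IsMonomialIdeal {R : Type} [CommSemiring R] {m : ℕ} (J : Ideal (MvPolynomial (Fin m) R)) :
    Prop :=
  ∃ S : Set (Fin m →₀ ℕ), J = Ideal.span ((fun u => (monomial u 1 : MvPolynomial (Fin m) R)) '' S)

/-- The Laurent polynomial ring `K[x_1^{±1},…,x_n^{±1}]`, i.e. the monoid algebra of `ℤ^n`. -/
abbrev LaurentPoly (K : Type) [CommRing K] (n : ℕ) : Type := AddMonoidAlgebra K (Fin n → ℤ)

namespace ValSetup

variable {K 𝕜 : Type} [Field K] [Field 𝕜]

/-- `trop(f)(w)` for a Laurent polynomial `f`. -/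
def tropL (V : ValSetup K 𝕜) {n : ℕ} (f : LaurentPoly K n) (w : Fin n → ℝ) : ℝ :=
  sInf ((fun u => V.val (f.coeff u) + dotZ w u) '' (f.coeff.support : Set (Fin n → ℤ)))

/-- The initial form `in_w(f) ∈ 𝕜[x_1^{±1},…,x_n^{±1}]` of a Laurent polynomial. -/
def initialFormL (V : ValSetup K 𝕜) {n : ℕ} (w : Fin n → ℝ) (f : LaurentPoly K n) :
    LaurentPoly 𝕜 n :=
  ∑ u ∈ f.coeff.support.filter (fun u => V.val (f.coeff u) + dotZ w u = V.tropL f w),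
    AddMonoidAlgebra.single u (V.res (V.t (-(V.val (f.coeff u))) * f.coeff u))

/-- The initial ideal `in_w(I) ⊆ 𝕜[x_1^{±1},…,x_n^{±1}]` of an ideal of Laurent polynomials. -/
def initialIdealL (V : ValSetup K 𝕜) {n : ℕ} (w : Fin n → ℝ) (I : Ideal (LaurentPoly K n)) :
    Ideal (LaurentPoly 𝕜 n) :=
  Ideal.span {g | ∃ f ∈ I, g = V.initialFormL w f}

/-- The tropical hypersurface `trop(V(f))` of a Laurent polynomial `f = Σ_u c_u x^u`:
the set of `w ∈ ℝ^n` at which the minimum `min{val(c_u) + w·u : c_u ≠ 0}` is achieved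
at least twice. -/
def tropHyp (V : ValSetup K 𝕜) {n : ℕ} (f : LaurentPoly K n) : Set (Fin n → ℝ) :=
  {w | ∃ u₁ ∈ f.coeff.support, ∃ u₂ ∈ f.coeff.support, u₁ ≠ u₂ ∧
    V.val (f.coeff u₁) + dotZ w u₁ = V.val (f.coeff u₂) + dotZ w u₂ ∧
    ∀ u ∈ f.coeff.support, V.val (f.coeff u₁) + dotZ w u₁ ≤ V.val (f.coeff u) + dotZ w u}

/-- `trop(V(I)) = ⋂_{0 ≠ f ∈ I} trop(V(f))` for an ideal of Laurent polynomials. -/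
def tropV (V : ValSetup K 𝕜) {n : ℕ} (I : Ideal (LaurentPoly K n)) : Set (Fin n → ℝ) :=
  ⋂ f ∈ {f : LaurentPoly K n | f ∈ I ∧ f ≠ 0}, V.tropHyp f

end ValSetup

/-- The character of `ℤ^n` given by a point `x` of the torus `(K^*)^n`:
`u ↦ x^u = Π_i x_i^{u_i}`. -/
def torusChar {K : Type} [Field K] {n : ℕ} (x : Fin n → Kˣ) :
    Multiplicative (Fin n → ℤ) →* K where
  toFun u := ∏ i, ((x i : K) ^ ((Multiplicative.toAdd u) i : ℤ))
  map_one' := by simp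
  map_mul' u v := by
    simp only [← Finset.prod_mul_distrib, toAdd_mul, Pi.add_apply]
    refine Finset.prod_congr rfl fun i _ => ?_
    exact zpow_add₀ (x i).ne_zero _ _

/-- Evaluation of Laurent polynomials at a point of the torus `(K^*)^n`, as a `K`-algebra
homomorphism. -/
def torusEval {K : Type} [Field K] {n : ℕ} (x : Fin n → Kˣ) :
    LaurentPoly K n →ₐ[K] K :=
  AddMonoidAlgebra.lift K K (Fin n → ℤ) (torusChar x)

/-- The subvariety of the torus `(K^*)^n` cut out by an ideal of Laurent polynomials. -/
def torusZeros {K : Type} [Field K] {n : ℕ} (J : Ideal (LaurentPoly K n)) :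
    Set (Fin n → Kˣ) :=
  {x | ∀ f ∈ J, torusEval x f = 0}

/-- The ideal `I(X)` of all Laurent polynomials vanishing on a subset `X` of the torus. -/
def vanishingIdeal {K : Type} [Field K] {n : ℕ} (X : Set (Fin n → Kˣ)) :
    Ideal (LaurentPoly K n) where
  carrier := {f | ∀ x ∈ X, torusEval x f = 0}
  add_mem' ha hb x hx := by simp [map_add, ha x hx, hb x hx]
  zero_mem' x hx := by simp
  smul_mem' c f hf x hx := by simp [smul_eq_mul, map_mul, hf x hx]

/-!
The ratio `ρ = φ₁ / φ₂` of the two splittings is a homomorphism from `Γ` to the units of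
valuation zero, so `u ↦ (ρ (w·u))‾` is a character of `ℤⁿ`, and twisting by it is a
`𝕜`-algebra automorphism `ψ` of `𝕜[x^{±1}]` with `ψ(xᵢ) = (ρ wᵢ)‾ xᵢ`. If `c x^u` is a
leading term of `f` at `w`, with `v = val c` and `v + w·u = T = trop(f)(w)`, then
`φ₂(-v) c · ρ(w·u) = ρ(T) · φ₁(-v) c`. Hence `ψ (in^{φ₂}_w f) = (ρ T)‾ · in^{φ₁}_w f`,
so the generators of the two initial ideals agree up to units.
-/

namespace AddMonoidAlgebra

variable {R G : Type*} [CommSemiring R] [AddCommMonoid G]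

def twist (χ : Multiplicative G →* R) : AddMonoidAlgebra R G →ₐ[R] AddMonoidAlgebra R G :=
  lift R (AddMonoidAlgebra R G) G (of R G * (algebraMap R (AddMonoidAlgebra R G) : R →* _).comp χ)

@[simp]
lemma twist_single (χ : Multiplicative G →* R) (u : G) (a : R) :
    twist χ (single u a) = single u (χ (Multiplicative.ofAdd u) * a) := by
  simp [twist, mul_comm]

lemma twist_comp_twist (χ χ' : Multiplicative G →* R) :
    (twist χ).comp (twist χ') = twist (χ * χ') :=
  algHom_ext (fun u => by simp [mul_comm]) (Subsingleton.elim _ _)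

lemma twist_one : twist (1 : Multiplicative G →* R) = AlgHom.id R _ :=
  algHom_ext (fun u => by simp) (Subsingleton.elim _ _)

def twistEquiv (χ : Multiplicative G →* Rˣ) : AddMonoidAlgebra R G ≃ₐ[R] AddMonoidAlgebra R G :=
  AlgEquiv.ofAlgHom (twist ((Units.coeHom R).comp χ)) (twist ((Units.coeHom R).comp χ⁻¹))
    (by rw [twist_comp_twist, ← MonoidHom.comp_mul, mul_inv_cancel, MonoidHom.comp_one, twist_one])
    (by rw [twist_comp_twist, ← MonoidHom.comp_mul, inv_mul_cancel, MonoidHom.comp_one, twist_one])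

@[simp]
lemma twistEquiv_single (χ : Multiplicative G →* Rˣ) (u : G) (a : R) :
    twistEquiv χ (single u a) = single u (χ (Multiplicative.ofAdd u) * a) :=
  twist_single _ u a

end AddMonoidAlgebra

lemma Ideal.span_image_eq_span_image_of_associated {α R : Type*} [CommSemiring R] {s : Set α}
    {g h : α → R} (H : ∀ a ∈ s, Associated (g a) (h a)) :
    Ideal.span (g '' s) = Ideal.span (h '' s) := by
  apply le_antisymm <;> refine Ideal.span_le.mpr ?_ <;> rintro _ ⟨a, ha, rfl⟩
  · exact (Ideal.mem_iff_of_associated (H a ha)).mpr (Ideal.subset_span ⟨a, ha, rfl⟩)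
  · exact (Ideal.mem_iff_of_associated (H a ha)).mp (Ideal.subset_span ⟨a, ha, rfl⟩)

lemma dotZ_zero {n : ℕ} (w : Fin n → ℝ) : dotZ w 0 = 0 := by
  simp [dotZ]

lemma dotZ_add {n : ℕ} (w : Fin n → ℝ) (u v : Fin n → ℤ) :
    dotZ w (u + v) = dotZ w u + dotZ w v := by
  simp only [dotZ, Pi.add_apply, Int.cast_add, mul_add, Finset.sum_add_distrib]

lemma dotZ_single {n : ℕ} (w : Fin n → ℝ) (i : Fin n) : dotZ w (Pi.single i 1) = w i := by
  simp [dotZ, Pi.single_apply]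

namespace ValSetup

variable {K 𝕜 : Type} [Field K] [Field 𝕜]

section

variable (V : ValSetup K 𝕜)

lemma val_inv {a : K} (ha : a ≠ 0) : V.val a⁻¹ = -V.val a := by
  have h := V.val_mul ha (inv_ne_zero ha)
  rw [mul_inv_cancel₀ ha, V.val_one] at h
  linarith

def valueGroup : AddSubgroup ℝ where
  carrier := V.Gamma
  zero_mem' := ⟨1, one_ne_zero, V.val_one⟩
  add_mem' := by
    rintro _ _ ⟨a, ha, rfl⟩ ⟨b, hb, rfl⟩
    exact ⟨a * b, mul_ne_zero ha hb, V.val_mul ha hb⟩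
  neg_mem' := by
    rintro _ ⟨a, ha, rfl⟩
    exact ⟨a⁻¹, inv_ne_zero ha, V.val_inv ha⟩

lemma val_mem_Gamma {a : K} (ha : a ≠ 0) : V.val a ∈ V.Gamma := ⟨a, ha, rfl⟩

lemma dotZ_mem_Gamma {n : ℕ} {w : Fin n → ℝ} (hw : ∀ i, w i ∈ V.Gamma) (u : Fin n → ℤ) :
    dotZ w u ∈ V.Gamma :=
  V.valueGroup.sum_mem fun i _ => by
    simpa [zsmul_eq_mul, mul_comm] using V.valueGroup.zsmul_mem (hw i) (u i)

lemma tropL_mem_Gamma {n : ℕ} {w : Fin n → ℝ} (hw : ∀ i, w i ∈ V.Gamma) (f : LaurentPoly K n) :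
    V.tropL f w ∈ V.Gamma := by
  rcases (f.coeff.support : Set (Fin n → ℤ)).eq_empty_or_nonempty with hf | hf
  · rw [tropL, hf, Set.image_empty, Real.sInf_empty]
    exact V.valueGroup.zero_mem
  · obtain ⟨u, hu, hmin⟩ := (hf.image (fun u => V.val (f.coeff u) + dotZ w u)).csInf_mem
      (f.coeff.support.finite_toSet.image _)
    rw [tropL, ← hmin]
    exact V.valueGroup.add_mem (V.val_mem_Gamma (Finsupp.mem_support_iff.mp hu))
      (V.dotZ_mem_Gamma hw u)

lemma t_zero : V.t 0 = 1 := by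
  have h0 : (0 : ℝ) ∈ V.Gamma := V.valueGroup.zero_mem
  have h := V.t_add h0 h0
  rw [add_zero] at h
  exact (mul_eq_left₀ (V.t_ne_zero h0)).mp h.symm

lemma t_neg {r : ℝ} (hr : r ∈ V.Gamma) : V.t (-r) = (V.t r)⁻¹ := by
  have h := V.t_add hr (V.valueGroup.neg_mem hr)
  rw [add_neg_cancel, V.t_zero] at h
  exact eq_inv_of_mul_eq_one_right h.symm

def initialCoeff (c : K) : 𝕜 := V.res (V.t (-V.val c) * c)

lemma val_t_neg_val_mul {c : K} (hc : c ≠ 0) : V.val (V.t (-V.val c) * c) = 0 := by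
  have hv : -V.val c ∈ V.Gamma := V.valueGroup.neg_mem (V.val_mem_Gamma hc)
  rw [V.val_mul (V.t_ne_zero hv) hc, V.val_t hv, neg_add_cancel]

lemma res_ne_zero_of_val_eq_zero {a : K} (ha : a ≠ 0) (hv : V.val a = 0) : V.res a ≠ 0 := by
  rw [ne_eq, V.res_eq_zero_iff ha hv.ge, hv]
  exact lt_irrefl 0

end

def splittingRatio (V₁ V₂ : ValSetup K 𝕜) (r : ℝ) : K := V₁.t r * (V₂.t r)⁻¹

variable {V₁ V₂ : ValSetup K 𝕜}

lemma mem_Gamma_of_val_eq (hval : V₁.val = V₂.val) {r : ℝ} (hr : r ∈ V₁.Gamma) :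
    r ∈ V₂.Gamma := by
  simpa only [Gamma, hval] using hr

lemma splittingRatio_ne_zero (hval : V₁.val = V₂.val) {r : ℝ} (hr : r ∈ V₁.Gamma) :
    splittingRatio V₁ V₂ r ≠ 0 :=
  mul_ne_zero (V₁.t_ne_zero hr) (inv_ne_zero (V₂.t_ne_zero (mem_Gamma_of_val_eq hval hr)))

lemma val_splittingRatio (hval : V₁.val = V₂.val) {r : ℝ} (hr : r ∈ V₁.Gamma) :
    V₁.val (splittingRatio V₁ V₂ r) = 0 := by
  have hr₂ : r ∈ V₂.Gamma := mem_Gamma_of_val_eq hval hr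
  have ht₂ := V₂.t_ne_zero hr₂
  rw [splittingRatio, V₁.val_mul (V₁.t_ne_zero hr) (inv_ne_zero ht₂), V₁.val_inv ht₂,
    V₁.val_t hr, hval, V₂.val_t hr₂, add_neg_cancel]

lemma splittingRatio_add (hval : V₁.val = V₂.val) {r s : ℝ} (hr : r ∈ V₁.Gamma)
    (hs : s ∈ V₁.Gamma) :
    splittingRatio V₁ V₂ (r + s) = splittingRatio V₁ V₂ r * splittingRatio V₁ V₂ s := by
  rw [splittingRatio, splittingRatio, splittingRatio, V₁.t_add hr hs,
    V₂.t_add (mem_Gamma_of_val_eq hval hr) (mem_Gamma_of_val_eq hval hs)]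
  ring

lemma initialCoeff_mul_res_splittingRatio (hval : V₁.val = V₂.val) (hres : V₁.res = V₂.res)
    {c : K} (hc : c ≠ 0) {r : ℝ} (hr : r ∈ V₁.Gamma) :
    V₂.initialCoeff c * V₁.res (splittingRatio V₁ V₂ r) =
      V₁.res (splittingRatio V₁ V₂ (V₁.val c + r)) * V₁.initialCoeff c := by
  have hv : V₁.val c ∈ V₁.Gamma := V₁.val_mem_Gamma hc
  have hv₂ : V₁.val c ∈ V₂.Gamma := mem_Gamma_of_val_eq hval hv
  have hr₂ : r ∈ V₂.Gamma := mem_Gamma_of_val_eq hval hr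
  have hK : V₂.t (-V₁.val c) * c * splittingRatio V₁ V₂ r =
      splittingRatio V₁ V₂ (V₁.val c + r) * (V₁.t (-V₁.val c) * c) := by
    have := V₁.t_ne_zero hv
    have := V₂.t_ne_zero hv₂
    have := V₂.t_ne_zero hr₂
    rw [splittingRatio, splittingRatio, V₁.t_add hv hr, V₂.t_add hv₂ hr₂, V₁.t_neg hv,
      V₂.t_neg hv₂]
    field_simp
  have hc₂ : V₁.val (V₂.t (-V₁.val c) * c) = 0 := by
    simpa only [hval] using V₂.val_t_neg_val_mul hc
  calc V₂.initialCoeff c * V₁.res (splittingRatio V₁ V₂ r)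
      = V₁.res (V₂.t (-V₁.val c) * c) * V₁.res (splittingRatio V₁ V₂ r) := by
        rw [initialCoeff, hres, hval]
    _ = V₁.res (V₂.t (-V₁.val c) * c * splittingRatio V₁ V₂ r) :=
        (V₁.res_mul (.inr hc₂.ge) (.inr (val_splittingRatio hval hr).ge)).symm
    _ = V₁.res (splittingRatio V₁ V₂ (V₁.val c + r) * (V₁.t (-V₁.val c) * c)) := by rw [hK]
    _ = V₁.res (splittingRatio V₁ V₂ (V₁.val c + r)) * V₁.initialCoeff c :=
        V₁.res_mul (.inr (val_splittingRatio hval (V₁.valueGroup.add_mem hv hr)).ge)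
          (.inr (V₁.val_t_neg_val_mul hc).ge)

def residueRatioChar (hval : V₁.val = V₂.val) {n : ℕ} (w : Fin n → ℝ)
    (hw : ∀ i, w i ∈ V₁.Gamma) : Multiplicative (Fin n → ℤ) →* 𝕜ˣ where
  toFun u := Units.mk0 (V₁.res (splittingRatio V₁ V₂ (dotZ w u.toAdd)))
    (V₁.res_ne_zero_of_val_eq_zero (splittingRatio_ne_zero hval (V₁.dotZ_mem_Gamma hw _))
      (val_splittingRatio hval (V₁.dotZ_mem_Gamma hw _)))
  map_one' := by
    ext
    simp [dotZ_zero, splittingRatio, V₁.t_zero, V₂.t_zero, V₁.res_one]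
  map_mul' u v := by
    ext
    have hu := V₁.dotZ_mem_Gamma hw u.toAdd
    have hv := V₁.dotZ_mem_Gamma hw v.toAdd
    simp only [toAdd_mul, dotZ_add, splittingRatio_add hval hu hv, Units.val_mk0, Units.val_mul]
    exact V₁.res_mul (.inr (val_splittingRatio hval hu).ge) (.inr (val_splittingRatio hval hv).ge)

lemma coe_residueRatioChar (hval : V₁.val = V₂.val) {n : ℕ} (w : Fin n → ℝ)
    (hw : ∀ i, w i ∈ V₁.Gamma) (u : Fin n → ℤ) :
    (residueRatioChar hval w hw (.ofAdd u) : 𝕜) = V₁.res (splittingRatio V₁ V₂ (dotZ w u)) :=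
  rfl

lemma twistEquiv_initialFormL (hval : V₁.val = V₂.val) (hres : V₁.res = V₂.res) {n : ℕ}
    (w : Fin n → ℝ) (hw : ∀ i, w i ∈ V₁.Gamma) (f : LaurentPoly K n) :
    AddMonoidAlgebra.twistEquiv (residueRatioChar hval w hw) (V₂.initialFormL w f) =
      V₁.res (splittingRatio V₁ V₂ (V₁.tropL f w)) • V₁.initialFormL w f := by
  have hsupp : {u ∈ f.coeff.support | V₂.val (f.coeff u) + dotZ w u = V₂.tropL f w} =
      {u ∈ f.coeff.support | V₁.val (f.coeff u) + dotZ w u = V₁.tropL f w} := by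
    rw [tropL, tropL, hval]
  rw [initialFormL, initialFormL, hsupp, map_sum, Finset.smul_sum]
  refine Finset.sum_congr rfl fun u hu => ?_
  obtain ⟨hu_supp, hmin⟩ := Finset.mem_filter.mp hu
  rw [AddMonoidAlgebra.twistEquiv_single, AddMonoidAlgebra.smul_single, mul_comm, smul_eq_mul,
    coe_residueRatioChar, ← hmin]
  exact congrArg _ (initialCoeff_mul_res_splittingRatio hval hres
    (Finsupp.mem_support_iff.mp hu_supp) (V₁.dotZ_mem_Gamma hw u))

lemma associated_twistEquiv_initialFormL (hval : V₁.val = V₂.val) (hres : V₁.res = V₂.res)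
    {n : ℕ} (w : Fin n → ℝ) (hw : ∀ i, w i ∈ V₁.Gamma) (f : LaurentPoly K n) :
    Associated (AddMonoidAlgebra.twistEquiv (residueRatioChar hval w hw) (V₂.initialFormL w f))
      (V₁.initialFormL w f) := by
  have hT := V₁.tropL_mem_Gamma hw f
  have hα := V₁.res_ne_zero_of_val_eq_zero (splittingRatio_ne_zero hval hT)
    (val_splittingRatio hval hT)
  rw [twistEquiv_initialFormL hval hres w hw f, Algebra.smul_def]
  exact associated_unit_mul_left _ _ ((isUnit_iff_ne_zero.mpr hα).map _)

lemma initialIdealL_eq_span_image (V : ValSetup K 𝕜) {n : ℕ} (w : Fin n → ℝ)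
    (I : Ideal (LaurentPoly K n)) : V.initialIdealL w I = Ideal.span (V.initialFormL w '' I) := by
  simp only [initialIdealL, Set.image, eq_comm, SetLike.mem_coe]

end ValSetup

/-- (Remark 2.11.)  Let `φ₁, φ₂ : Γ → K^*` be two splittings of the valuation (encoded here
as two setups `V₁, V₂` sharing the same valuation and the same reduction map), let
`w ∈ Γ^n` and let `I ⊆ K[x_1^{±1},…,x_n^{±1}]` be an ideal.  Then there is a `𝕜`-algebra
automorphism `ψ` of `𝕜[x_1^{±1},…,x_n^{±1}]`, given on variables by
`x_i ↦ (φ₁(w_i)/φ₂(w_i))‾ · x_i`, such that `ψ(in_w^{φ₂}(I)) = in_w^{φ₁}(I)`. -/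
theorem initialIdeal_splitting_independent {K 𝕜 : Type} [Field K] [Field 𝕜]
    (V₁ V₂ : ValSetup K 𝕜) (hval : V₁.val = V₂.val) (hres : V₁.res = V₂.res)
    {n : ℕ} (w : Fin n → ℝ) (hw : ∀ i, w i ∈ V₁.Gamma) (I : Ideal (LaurentPoly K n)) :
    ∃ ψ : LaurentPoly 𝕜 n ≃ₐ[𝕜] LaurentPoly 𝕜 n,
      (∀ i : Fin n,
        ψ (AddMonoidAlgebra.single (Pi.single i (1:ℤ)) (1:𝕜))
          = AddMonoidAlgebra.single (Pi.single i (1:ℤ)) (V₁.res (V₁.t (w i) * (V₂.t (w i))⁻¹))) ∧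
      Ideal.map ψ (V₂.initialIdealL w I) = V₁.initialIdealL w I := by
  refine ⟨AddMonoidAlgebra.twistEquiv (ValSetup.residueRatioChar hval w hw), fun i => ?_, ?_⟩
  · rw [AddMonoidAlgebra.twistEquiv_single, ValSetup.coe_residueRatioChar, dotZ_single, mul_one]
    rfl
  · rw [ValSetup.initialIdealL_eq_span_image, ValSetup.initialIdealL_eq_span_image, Ideal.map_span,
      Set.image_image]
    exact Ideal.span_image_eq_span_image_of_associated fun f _ =>
      ValSetup.associated_twistEquiv_initialFormL hval hres w hw f
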